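/- arXiv:2202.09822 — 2 statements merged into one kernel-verified Lean document; each statement's English description precedes it below -/
import Mathlib

section
/- Let G be a finite simple graph on n vertices that contains a perfect matching M such that each edge uv ∈ M is a pair of adjacent twins, i.e., N[u] = N[v]. Then r₂(G) = n and b₂(G) ≤ n/2 + 1. -/
open scoped Classical

/-- A list of bicliques `B 0, …, B (k-1)` (each given by a pair of disjoint
vertex subsets) is an *odd cover* of `G` if two distinct vertices are adjacent
in `G` exactly when they lie in opposite parts of an odd number of the bicliques. -/
def IsOddCover {V : Type*} [Fintype V] (G : SimpleGraph V) {k : ℕ}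
    (B : Fin k → Finset V × Finset V) : Prop :=
  (∀ i, Disjoint (B i).1 (B i).2) ∧
  ∀ u v : V, u ≠ v →
    (G.Adj u v ↔ Odd (Finset.univ.filter (fun i : Fin k =>
      (u ∈ (B i).1 ∧ v ∈ (B i).2) ∨ (u ∈ (B i).2 ∧ v ∈ (B i).1))).card)

/-- `b2 G` is the minimum cardinality of an odd cover of `G`. -/
noncomputable def b2 {V : Type*} [Fintype V] (G : SimpleGraph V) : ℕ :=
  sInf {k : ℕ | ∃ B : Fin k → Finset V × Finset V, IsOddCover G B}

/-- `r2 G` is the rank of the adjacency matrix of `G` over `𝔽₂`. -/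
noncomputable def r2 {V : Type*} [Fintype V] (G : SimpleGraph V) : ℕ :=
  (Matrix.of fun u v : V => if G.Adj u v then (1 : ZMod 2) else 0).rank

/-!
Let `σ` swap the two ends of each matching edge. Since `N[v] = N[σ v]`, the rows of `A + I`
indexed by `v` and `σ v` coincide. So if `A x = 0`, then `x v = ((A + I) x) v = x (σ v)`, and
`((A + I) x) v` is the sum of the `σ`-invariant function `x` over the `σ`-invariant set `N[v]`,
which vanishes in characteristic `2`; hence `A` is invertible over `𝔽₂`.

For the odd cover, fix a representative `i_v` of the pair of each vertex `v` and a side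
`s v ∈ 𝔽₂` separating the two vertices of a pair. Let `g i r` be the strictly upper triangular
part of the adjacency matrix on representatives and `ρ i = ∑ r, g i r`. For each of the `m = n/2`
representatives `r`, one biclique omits the pair of `r` and puts `v` on side `s v + g i_v r`; one
more biclique contains every vertex, on side `m * s v + ρ i_v`. Modulo `2`, the two vertices of a
pair are then separated `(m - 1) + m` times, and vertices from distinct pairs `i ≠ j` are separated
`g i j + g j i` times: the terms in `s` and `ρ` cancel.
-/

open Finset
open scoped Matrix

section OddCover

variable {V : Type*}

def bicliqueOfSides (S : Finset V) (a : V → ZMod 2) : Finset V × Finset V :=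
  (S.filter fun v => a v = 0, S.filter fun v => a v = 1)

theorem disjoint_bicliqueOfSides (S : Finset V) (a : V → ZMod 2) :
    Disjoint (bicliqueOfSides S a).1 (bicliqueOfSides S a).2 := by
  simp +contextual [bicliqueOfSides, disjoint_left]

variable [DecidableEq V]

theorem ite_opposite_bicliqueOfSides (S : Finset V) (a : V → ZMod 2) (u v : V) :
    (if (u ∈ (bicliqueOfSides S a).1 ∧ v ∈ (bicliqueOfSides S a).2) ∨
        (u ∈ (bicliqueOfSides S a).2 ∧ v ∈ (bicliqueOfSides S a).1) then (1 : ZMod 2) else 0) =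
      if u ∈ S ∧ v ∈ S then a u + a v else 0 := by
  simp only [bicliqueOfSides, mem_filter]
  generalize a u = x, a v = y
  by_cases u ∈ S <;> by_cases v ∈ S <;> simp_all
  revert x y
  decide

theorem b2_le_card_of_sides [Fintype V] {ι : Type*} [Fintype ι] (G : SimpleGraph V)
    (S : ι → Finset V) (a : ι → V → ZMod 2)
    (h : ∀ u v, u ≠ v → (if G.Adj u v then (1 : ZMod 2) else 0) =
      ∑ i, if u ∈ S i ∧ v ∈ S i then a i u + a i v else 0) :
    b2 G ≤ Fintype.card ι := by
  let e := (Fintype.equivFin ι).symm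
  refine Nat.sInf_le ⟨fun k => bicliqueOfSides (S (e k)) (a (e k)),
    fun k => disjoint_bicliqueOfSides _ _, fun u v huv => ?_⟩
  rw [← ZMod.natCast_eq_one_iff_odd, card_filter, Nat.cast_sum]
  simp only [Nat.cast_ite, Nat.cast_one, Nat.cast_zero, ite_opposite_bicliqueOfSides]
  rw [e.sum_comp (fun i => if u ∈ S i ∧ v ∈ S i then a i u + a i v else 0), ← h u v huv]
  split_ifs <;> simp_all

end OddCover

section Pairs

variable {V : Type*} [LinearOrder V] (σ : V → V)

def pairRep (v : V) : V := min v (σ v)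

def pairReps [Fintype V] : Finset V := univ.filter fun v => v < σ v

def pairSide (v : V) : ZMod 2 := if v < σ v then 0 else 1

theorem pairRep_eq_or (v : V) : pairRep σ v = v ∨ pairRep σ v = σ v :=
  min_choice _ _

variable {σ} (hσ : Function.Involutive σ)
include hσ

theorem pairRep_apply_self (v : V) : pairRep σ (σ v) = pairRep σ v := by
  rw [pairRep, pairRep, hσ v, min_comm]

theorem pairRep_pairRep (v : V) : pairRep σ (pairRep σ v) = pairRep σ v := by
  rcases pairRep_eq_or σ v with h | h
  · rw [h, h]
  · rw [h, pairRep_apply_self hσ, h]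

theorem eq_of_pairRep_eq {u v : V} (h : pairRep σ u = pairRep σ v) (huv : u ≠ v) : v = σ u := by
  rcases pairRep_eq_or σ u with hu | hu <;> rcases pairRep_eq_or σ v with hv | hv <;>
    rw [hu, hv] at h
  · exact absurd h huv
  · rw [h, hσ v]
  · exact h.symm
  · exact absurd (hσ.injective h) huv

variable (hne : ∀ v, σ v ≠ v)
include hne

theorem pairRep_mem_pairReps [Fintype V] (v : V) : pairRep σ v ∈ pairReps σ := by
  simp only [pairReps, mem_filter_univ, pairRep]
  rcases lt_or_gt_of_ne (hne v).symm with h | h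
  · rwa [min_eq_left h.le]
  · rwa [min_eq_right h.le, hσ v]

theorem pairSide_add_pairSide_apply_self (v : V) : pairSide σ v + pairSide σ (σ v) = 1 := by
  simp only [pairSide, hσ v]
  rcases lt_or_gt_of_ne (hne v).symm with h | h <;> simp [h, h.not_gt]

theorem card_eq_two_mul_card_pairReps [Fintype V] : Fintype.card V = 2 * #(pairReps σ) := by
  have hswap : #(pairReps σ) = #(univ.filter fun v => ¬ v < σ v) := by
    refine card_nbij' σ σ (fun v hv => ?_) (fun v hv => ?_) (fun v _ => hσ v) (fun v _ => hσ v)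
    all_goals simp only [pairReps, coe_filter_univ, Set.mem_ofPred_eq, not_lt, hσ v] at hv ⊢
    · exact hv.le
    · exact lt_of_le_of_ne hv (hne v)
  rw [← card_univ, ← card_filter_add_card_filter_not (fun v => v < σ v), ← hswap, pairReps, two_mul]

end Pairs

theorem Finset.sum_ite_ne_ne {α M : Type*} [DecidableEq α] [AddCommGroup M] {s : Finset α}
    {i j : α} (hi : i ∈ s) (hj : j ∈ s) (f : α → M) :
    ∑ r ∈ s, (if i ≠ r ∧ j ≠ r then f r else 0) = ∑ r ∈ s, f r - ∑ r ∈ {i, j}, f r := by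
  rw [eq_sub_iff_add_eq, ← sum_filter, ← sum_sdiff (insert_subset hi (singleton_subset_iff.2 hj))]
  congr 2
  ext r
  simp [eq_comm, and_comm]

namespace SimpleGraph

variable {V : Type*} (G : SimpleGraph V)

theorem mem_insert_neighborFinset_comm [Fintype V] [DecidableRel G.Adj] {u v : V} :
    u ∈ insert v (G.neighborFinset v) ↔ v ∈ insert u (G.neighborFinset u) := by
  simp [eq_comm, G.adj_comm]

section UpperAdj

variable [LinearOrder V]

noncomputable def adjUpper (i r : V) : ZMod 2 := if i < r ∧ G.Adj i r then 1 else 0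

theorem adjUpper_self (i : V) : G.adjUpper i i = 0 := by
  simp [adjUpper]

theorem adjUpper_add_adjUpper {i j : V} (hij : i ≠ j) :
    G.adjUpper i j + G.adjUpper j i = if G.Adj i j then 1 else 0 := by
  rcases lt_or_gt_of_ne hij with h | h <;> simp [adjUpper, h, h.not_gt, G.adj_comm]

variable [Fintype V] (σ : V → V)

noncomputable def upperDegree (i : V) : ZMod 2 := ∑ r ∈ pairReps σ, G.adjUpper i r

-- The cover of the header, with `s = pairSide σ`, `g = adjUpper G`, `ρ = upperDegree G σ` and
-- `i_v = pairRep σ v`; the index `none` is the biclique containing every vertex.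
def twinCoverSupport : Option (pairReps σ) → Finset V
  | none => univ
  | some r => univ.filter fun v => pairRep σ v ≠ r

noncomputable def twinCoverSide : Option (pairReps σ) → V → ZMod 2
  | none, v => #(pairReps σ) * pairSide σ v + G.upperDegree σ (pairRep σ v)
  | some r, v => pairSide σ v + G.adjUpper (pairRep σ v) r

end UpperAdj

structure IsTwinInvolution (σ : V → V) : Prop where
  involutive : Function.Involutive σ
  adj : ∀ v, G.Adj v (σ v)
  closedNeighborSet_eq : ∀ v, G.neighborSet v ∪ {v} = G.neighborSet (σ v) ∪ {σ v}

namespace IsTwinInvolution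

variable {G} {σ : V → V} (hσ : G.IsTwinInvolution σ)
include hσ

theorem ne (v : V) : σ v ≠ v :=
  (hσ.adj v).ne'

theorem adj_iff {v z : V} (hv : z ≠ v) (hσv : z ≠ σ v) : G.Adj v z ↔ G.Adj (σ v) z := by
  simpa [hv, hσv] using Set.ext_iff.mp (hσ.closedNeighborSet_eq v) z

section Rank

variable [Fintype V] [DecidableRel G.Adj]

theorem insert_neighborFinset_eq (v : V) :
    insert v (G.neighborFinset v) = insert (σ v) (G.neighborFinset (σ v)) := by
  ext z
  simpa [or_comm, eq_comm] using Set.ext_iff.mp (hσ.closedNeighborSet_eq v) z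

theorem eq_zero_of_adjMatrix_mulVec_eq_zero {K : Type*} [Field K] [CharP K 2] {x : V → K}
    (hx : G.adjMatrix K *ᵥ x = 0) : x = 0 := by
  have hclosed : ∀ v, ∑ u ∈ insert v (G.neighborFinset v), x u = x v := fun v => by
    rw [sum_insert (G.notMem_neighborFinset_self v), ← adjMatrix_mulVec_apply, hx,
      Pi.zero_apply, add_zero]
  have hxσ : ∀ v, x (σ v) = x v := fun v => by
    rw [← hclosed v, ← hclosed (σ v), hσ.insert_neighborFinset_eq v]
  funext v
  rw [← hclosed v]
  refine sum_involution (fun u _ => σ u) (fun u _ => by rw [hxσ, CharTwo.add_self_eq_zero])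
    (fun u _ _ => hσ.ne u) (fun u hu => ?_) (fun u _ => hσ.involutive u)
  rw [mem_insert_neighborFinset_comm] at hu ⊢
  rwa [← hσ.insert_neighborFinset_eq u]

theorem rank_adjMatrix [DecidableEq V] {K : Type*} [Field K] [CharP K 2] :
    (G.adjMatrix K).rank = Fintype.card V := by
  refine Matrix.rank_of_isUnit _ (Matrix.mulVec_injective_iff_isUnit.mp fun x y hxy => ?_)
  rw [← sub_eq_zero]
  exact hσ.eq_zero_of_adjMatrix_mulVec_eq_zero (by rw [Matrix.mulVec_sub, hxy, sub_self])

end Rank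

section Cover

variable [LinearOrder V]

theorem adj_pairRep_iff {a z : V} (h : pairRep σ z ≠ pairRep σ a) :
    G.Adj (pairRep σ a) z ↔ G.Adj a z := by
  rcases pairRep_eq_or σ a with ha | ha <;> rw [ha]
  exact (hσ.adj_iff (fun hz => h (by rw [hz]))
    (fun hz => h (by rw [hz, pairRep_apply_self hσ.involutive]))).symm

theorem adj_iff_adj_pairRep {u v : V} (h : pairRep σ u ≠ pairRep σ v) :
    G.Adj u v ↔ G.Adj (pairRep σ u) (pairRep σ v) := by
  rw [← hσ.adj_pairRep_iff h.symm, G.adj_comm, G.adj_comm (pairRep σ u),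
    ← hσ.adj_pairRep_iff (by rwa [pairRep_pairRep hσ.involutive])]

variable [Fintype V]

theorem adj_indicator_eq_sum_twinCover {u v : V} (huv : u ≠ v) :
    (if G.Adj u v then (1 : ZMod 2) else 0) =
      ∑ o, if u ∈ twinCoverSupport σ o ∧ v ∈ twinCoverSupport σ o then
        G.twinCoverSide σ o u + G.twinCoverSide σ o v else 0 := by
  rw [Fintype.sum_option]
  simp only [twinCoverSupport, twinCoverSide, mem_univ, mem_filter_univ, and_self, if_true]
  rw [sum_coe_sort (pairReps σ) fun r => if pairRep σ u ≠ r ∧ pairRep σ v ≠ r then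
      pairSide σ u + G.adjUpper (pairRep σ u) r + (pairSide σ v + G.adjUpper (pairRep σ v) r)
    else 0,
    sum_ite_ne_ne (pairRep_mem_pairReps hσ.involutive hσ.ne u)
      (pairRep_mem_pairReps hσ.involutive hσ.ne v)]
  have hsum : ∑ r ∈ pairReps σ,
      (pairSide σ u + G.adjUpper (pairRep σ u) r + (pairSide σ v + G.adjUpper (pairRep σ v) r)) =
      #(pairReps σ) * (pairSide σ u + pairSide σ v) + G.upperDegree σ (pairRep σ u) +
        G.upperDegree σ (pairRep σ v) := by
    simp only [sum_add_distrib, sum_const, nsmul_eq_mul, upperDegree]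
    ring
  rw [hsum]
  by_cases hij : pairRep σ u = pairRep σ v
  · obtain rfl : v = σ u := eq_of_pairRep_eq hσ.involutive hij huv
    have hside := pairSide_add_pairSide_apply_self hσ.involutive hσ.ne u
    rw [← hij, pair_eq_singleton, sum_singleton, G.adjUpper_self, if_pos (hσ.adj u)]
    grind
  · rw [sum_pair hij, G.adjUpper_self, G.adjUpper_self, hσ.adj_iff_adj_pairRep hij]
    have := G.adjUpper_add_adjUpper hij
    grind

end Cover

theorem b2_le_card_div_two_add_one [Fintype V] : b2 G ≤ Fintype.card V / 2 + 1 := by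
  let _ : LinearOrder V := LinearOrder.lift' _ (Fintype.equivFin V).injective
  have hcard := card_eq_two_mul_card_pairReps hσ.involutive hσ.ne
  calc b2 G ≤ Fintype.card (Option (pairReps σ)) :=
        b2_le_card_of_sides G (twinCoverSupport σ) (G.twinCoverSide σ) fun _ _ =>
          hσ.adj_indicator_eq_sum_twinCover
    _ = Fintype.card V / 2 + 1 := by
        rw [Fintype.card_option, Fintype.card_coe]
        omega

theorem r2_eq_card [Fintype V] : r2 G = Fintype.card V :=
  hσ.rank_adjMatrix

end IsTwinInvolution

variable {G} in
theorem Subgraph.IsPerfectMatching.exists_isTwinInvolution {M : G.Subgraph}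
    (hM : M.IsPerfectMatching)
    (htwin : ∀ u w, M.Adj u w → G.neighborSet u ∪ {u} = G.neighborSet w ∪ {w}) :
    ∃ σ, G.IsTwinInvolution σ := by
  choose σ hσ huniq using Subgraph.isPerfectMatching_iff.mp hM
  exact ⟨σ, fun v => (huniq (σ v) v (hσ v).symm).symm, fun v => M.adj_sub (hσ v),
    fun v => htwin v (σ v) (hσ v)⟩

end SimpleGraph

theorem stmt17 {V : Type*} [Fintype V] (G : SimpleGraph V) (M : G.Subgraph)
    (hM : M.IsPerfectMatching)
    (htwin : ∀ u w : V, M.Adj u w →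
      G.neighborSet u ∪ {u} = G.neighborSet w ∪ {w}) :
    r2 G = Fintype.card V ∧ b2 G ≤ Fintype.card V / 2 + 1 := by
  obtain ⟨σ, hσ⟩ := hM.exists_isTwinInvolution htwin
  exact ⟨hσ.r2_eq_card, hσ.b2_le_card_div_two_add_one⟩
end

section
/- For every positive integer k, the minimum cardinality of an odd cover of the complete graph satisfies b₂(K_{8k-1}) = 4k, b₂(K_{8k}) = 4k, and b₂(K_{8k+1}) = 4k + 1. -/
open scoped Classical

/-!
Over `𝔽₂`, a family of bicliques `(Xᵢ, Yᵢ)` is an odd cover of `G` exactly when the adjacency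
matrix of `G` is `∑ᵢ (xᵢ yᵢᵀ + yᵢ xᵢᵀ)`, where `xᵢ, yᵢ` are the characteristic vectors of `Xᵢ, Yᵢ`.
So an odd cover by `m` bicliques has `r₂(G) ≤ 2m`. For `Kₙ` the adjacency matrix is `J + I`:
it squares to `I` when `n` is even and to itself when `n` is odd, and it has rank at least
`n - 1`. In the odd case `r₂ = 2m` is impossible: the `xᵢ, yᵢ` would then be a basis of the range
of the projection `J + I`, and comparing coefficients in `(J + I) xᵢ = xᵢ` gives `yᵢ ⬝ xᵢ = 1`,
contradicting `Xᵢ ∩ Yᵢ = ∅`. Hence every odd cover of `Kₙ` has at least `⌈n/2⌉` bicliques.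

For the matching construction, take an odd cover of `K₈` by four bicliques in which every vertex
lies in an odd number of parts, and let `P` be the set of vertices lying in an odd number of
the `Xᵢ`. Copy it onto each of `k` blocks of eight vertices and extend the bicliques of a block
to the other blocks by the partition `(P, Pᶜ)`, oriented according to whether the other block
comes earlier or later. A pair of vertices then receives contributions only from the bicliques
of its own blocks, since every other block contributes four equal terms, and the choice of `P`
makes these contributions odd. This covers `K₈ₖ`, hence `K₈ₖ₋₁`, by `4k` bicliques, and one more
biclique joining a new vertex to all others covers `K₈ₖ₊₁`.
-/

open Finset Matrix Module Submodule

namespace Matrix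

variable {K m n κ : Type*} [Field K] [Fintype n]

theorem rank_add_le (A B : Matrix m n K) : (A + B).rank ≤ A.rank + B.rank := by
  rw [rank, rank, rank, mulVecLin_add]
  exact (Submodule.finrank_mono (LinearMap.range_add_le _ _)).trans
    (Submodule.finrank_add_le_finrank_add_finrank _ _)

variable [Fintype κ]

theorem sum_vecMulVec_mulVec (u : κ → n → K) (w : κ → n → K) (z : n → K) :
    (∑ k, vecMulVec (u k) (w k)) *ᵥ z = ∑ k, (w k ⬝ᵥ z) • u k := by
  simp [sum_mulVec, vecMulVec_mulVec]

theorem range_mulVecLin_sum_vecMulVec_le (u w : κ → n → K) :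
    LinearMap.range (∑ k, vecMulVec (u k) (w k)).mulVecLin ≤ span K (Set.range u) := by
  rintro _ ⟨z, rfl⟩
  rw [mulVecLin_apply, sum_vecMulVec_mulVec]
  exact Submodule.sum_mem _ fun k _ => Submodule.smul_mem _ _ (subset_span ⟨k, rfl⟩)

theorem rank_sum_vecMulVec_le (u w : κ → n → K) :
    (∑ k, vecMulVec (u k) (w k)).rank ≤ Fintype.card κ :=
  (Submodule.finrank_mono (range_mulVecLin_sum_vecMulVec_le u w)).trans
    (finrank_range_le_card u)

theorem dotProduct_eq_one_of_isIdempotentElem_sum_vecMulVec (u w : κ → n → K)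
    (hidem : IsIdempotentElem (∑ k, vecMulVec (u k) (w k)))
    (hrank : (∑ k, vecMulVec (u k) (w k)).rank = Fintype.card κ) (k : κ) :
    w k ⬝ᵥ u k = 1 := by
  classical
  set A := ∑ k, vecMulVec (u k) (w k)
  have hle := range_mulVecLin_sum_vecMulVec_le u w
  have hrange : LinearMap.range A.mulVecLin = span K (Set.range u) :=
    Submodule.eq_of_le_of_finrank_le hle ((finrank_range_le_card u).trans hrank.ge)
  have hli : LinearIndependent K u := by
    rw [linearIndependent_iff_card_eq_finrank_span, Set.finrank, ← hrange]
    exact hrank.symm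
  obtain ⟨z, hz⟩ : u k ∈ LinearMap.range A.mulVecLin := hrange ▸ subset_span ⟨k, rfl⟩
  rw [mulVecLin_apply] at hz
  have hfix : A *ᵥ u k = u k := by rw [← hz, mulVec_mulVec, hidem.eq]
  have hcoeff := Fintype.linearIndependent_iffₛ.mp hli (fun l => w l ⬝ᵥ u k) (Pi.single k 1)
    (by rw [← sum_vecMulVec_mulVec, hfix]; simp [Pi.single_apply]) k
  simpa using hcoeff

end Matrix

theorem ZMod.ite_eq_natCast_iff_odd (p : Prop) [Decidable p] (c : ℕ) :
    ((if p then 1 else 0 : ZMod 2) = c) ↔ (p ↔ Odd c) := by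
  by_cases hp : p <;>
    simp [hp, eq_comm (a := (0 : ZMod 2)), eq_comm (a := (1 : ZMod 2)),
      ZMod.natCast_eq_one_iff_odd, ZMod.natCast_eq_zero_iff_even]

theorem r2_eq_rank {V : Type*} [Fintype V] (G : SimpleGraph V) :
    r2 G = (G.adjMatrix (ZMod 2)).rank :=
  rfl

section OddCoverFamily

variable {V W ι κ : Type*} [DecidableEq V] [Fintype ι]

def charVec (s : Finset V) : V → ZMod 2 := fun v => if v ∈ s then 1 else 0

theorem charVec_mul_add_charVec_mul {s t : Finset V} (hst : Disjoint s t) (u v : V) :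
    charVec s u * charVec t v + charVec t u * charVec s v =
      if (u ∈ s ∧ v ∈ t) ∨ (u ∈ t ∧ v ∈ s) then 1 else 0 := by
  have hs : ∀ w ∈ s, w ∉ t := fun _ hw => Finset.disjoint_left.mp hst hw
  by_cases hu : u ∈ s <;> by_cases hv : v ∈ s <;>
    simp [charVec, hu, hv, hs u, hs v]

theorem charVec_dotProduct_eq_zero [Fintype V] {s t : Finset V} (hst : Disjoint s t) :
    charVec s ⬝ᵥ charVec t = 0 :=
  Finset.sum_eq_zero fun v _ => by
    by_cases hv : v ∈ s <;> simp [charVec, hv, Finset.disjoint_left.mp hst]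

theorem charVec_add_charVec_compl [Fintype V] (s : Finset V) (a : V) :
    charVec s a + charVec sᶜ a = 1 := by
  by_cases ha : a ∈ s <;> simp [charVec, ha]

def oddCoverMatrix (C : ι → Finset V × Finset V) : Matrix V V (ZMod 2) :=
  ∑ i, (vecMulVec (charVec (C i).1) (charVec (C i).2) +
    vecMulVec (charVec (C i).2) (charVec (C i).1))

theorem oddCoverMatrix_apply (C : ι → Finset V × Finset V) (u v : V) :
    oddCoverMatrix C u v = ∑ i, (charVec (C i).1 u * charVec (C i).2 v +
      charVec (C i).2 u * charVec (C i).1 v) := by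
  simp [oddCoverMatrix, Matrix.sum_apply, vecMulVec_apply]

theorem oddCoverMatrix_comm (C : ι → Finset V × Finset V) (u v : V) :
    oddCoverMatrix C u v = oddCoverMatrix C v u := by
  simp only [oddCoverMatrix_apply, mul_comm, add_comm]

theorem oddCoverMatrix_apply_self (C : ι → Finset V × Finset V) (u : V) :
    oddCoverMatrix C u u = 0 := by
  simp [oddCoverMatrix_apply, mul_comm, CharTwo.add_self_eq_zero]

theorem oddCoverMatrix_eq_sum_vecMulVec (C : ι → Finset V × Finset V) :
    oddCoverMatrix C = ∑ k : ι ⊕ ι, vecMulVec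
      (Sum.elim (fun i => charVec (C i).1) (fun i => charVec (C i).2) k)
      (Sum.elim (fun i => charVec (C i).2) (fun i => charVec (C i).1) k) := by
  simp [oddCoverMatrix, Fintype.sum_sum_type, Finset.sum_add_distrib]

def IsOddCoverFamily (G : SimpleGraph V) (C : ι → Finset V × Finset V) : Prop :=
  (∀ i, Disjoint (C i).1 (C i).2) ∧ G.adjMatrix (ZMod 2) = oddCoverMatrix C

variable {G : SimpleGraph V} {C : ι → Finset V × Finset V}

theorem IsOddCoverFamily.comp_equiv [Fintype κ] (hC : IsOddCoverFamily G C) (e : κ ≃ ι) :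
    IsOddCoverFamily G (C ∘ e) :=
  ⟨fun k => hC.1 (e k), hC.2.trans (e.sum_comp _).symm⟩

theorem isOddCoverFamily_top_iff :
    IsOddCoverFamily (⊤ : SimpleGraph V) C ↔
      (∀ i, Disjoint (C i).1 (C i).2) ∧ ∀ u v, u ≠ v → oddCoverMatrix C u v = 1 := by
  refine and_congr_right fun _ => ⟨fun h u v huv => ?_, fun h => ?_⟩
  · simp [← h, huv]
  · ext u v
    rcases eq_or_ne u v with rfl | huv
    · simp [oddCoverMatrix_apply_self]
    · simp [h u v huv, huv]

theorem IsOddCoverFamily.oddCoverMatrix_eq_allOnes_add_one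
    (hC : IsOddCoverFamily (⊤ : SimpleGraph V) C) :
    oddCoverMatrix C = vecMulVec 1 1 + 1 := by
  ext u v
  rcases eq_or_ne u v with rfl | huv
  · simp [oddCoverMatrix_apply_self, CharTwo.add_self_eq_zero]
  · simp [isOddCoverFamily_top_iff.mp hC |>.2 u v huv, huv]

theorem IsOddCoverFamily.comap [DecidableEq W] (hC : IsOddCoverFamily G C) (f : W ↪ V) :
    IsOddCoverFamily (G.comap f) fun i =>
      ((C i).1.preimage f f.injective.injOn, (C i).2.preimage f f.injective.injOn) := by
  refine ⟨fun i => Finset.disjoint_left.mpr fun w h₁ h₂ => ?_, ?_⟩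
  · rw [Finset.mem_preimage] at h₁ h₂
    exact Finset.disjoint_left.mp (hC.1 i) h₁ h₂
  · ext u v
    simpa [oddCoverMatrix_apply, charVec] using congrFun (congrFun hC.2 (f u)) (f v)

variable [Fintype V]

theorem isOddCover_iff_isOddCoverFamily {k : ℕ} (B : Fin k → Finset V × Finset V) :
    IsOddCover G B ↔ IsOddCoverFamily G B := by
  refine and_congr_right fun hdisj => ⟨fun h => ?_, fun h u v huv => ?_⟩
  · ext u v
    rcases eq_or_ne u v with rfl | huv
    · simp [oddCoverMatrix_apply_self]
    · rw [SimpleGraph.adjMatrix_apply, oddCoverMatrix_apply]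
      simp only [charVec_mul_add_charVec_mul (hdisj _), ← Finset.natCast_card_filter]
      exact (ZMod.ite_eq_natCast_iff_odd _ _).mpr (by convert h u v huv)
  · have := congrFun (congrFun h u) v
    rw [SimpleGraph.adjMatrix_apply, oddCoverMatrix_apply] at this
    simp only [charVec_mul_add_charVec_mul (hdisj _), ← Finset.natCast_card_filter] at this
    convert (ZMod.ite_eq_natCast_iff_odd _ _).mp this

theorem IsOddCoverFamily.exists_isOddCover (hC : IsOddCoverFamily G C) :
    ∃ B : Fin (Fintype.card ι) → Finset V × Finset V, IsOddCover G B :=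
  ⟨_, (isOddCover_iff_isOddCoverFamily _).mpr (hC.comp_equiv (Fintype.equivFin ι).symm)⟩

theorem b2_le_card (hC : IsOddCoverFamily G C) : b2 G ≤ Fintype.card ι :=
  Nat.sInf_le hC.exists_isOddCover

theorem le_b2 (hC : IsOddCoverFamily G C) {m : ℕ}
    (h : ∀ (k : ℕ) (B : Fin k → Finset V × Finset V), IsOddCoverFamily G B → m ≤ k) :
    m ≤ b2 G := by
  obtain ⟨B, hB⟩ : b2 G ∈ {k | ∃ B : Fin k → Finset V × Finset V, IsOddCover G B} :=
    Nat.sInf_mem ⟨_, hC.exists_isOddCover⟩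
  exact h _ B ((isOddCover_iff_isOddCoverFamily B).mp hB)

theorem IsOddCoverFamily.r2_le (hC : IsOddCoverFamily G C) : r2 G ≤ 2 * Fintype.card ι := by
  rw [r2_eq_rank, hC.2, oddCoverMatrix_eq_sum_vecMulVec]
  exact (rank_sum_vecMulVec_le _ _).trans (by simp [two_mul])

theorem IsOddCoverFamily.r2_lt (hC : IsOddCoverFamily G C) [Nonempty ι]
    (hidem : IsIdempotentElem (G.adjMatrix (ZMod 2))) : r2 G < 2 * Fintype.card ι := by
  refine hC.r2_le.lt_of_ne fun hrank => ?_
  obtain ⟨i⟩ := ‹Nonempty ι›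
  rw [r2_eq_rank, hC.2, oddCoverMatrix_eq_sum_vecMulVec] at hrank
  rw [hC.2, oddCoverMatrix_eq_sum_vecMulVec] at hidem
  have := dotProduct_eq_one_of_isIdempotentElem_sum_vecMulVec _ _ hidem
    (by rw [hrank]; simp [two_mul]) (Sum.inl i)
  simp [charVec_dotProduct_eq_zero (hC.1 i).symm] at this

theorem allOnes_add_one_mul_self :
    (vecMulVec 1 1 + 1 : Matrix V V (ZMod 2)) * (vecMulVec 1 1 + 1) =
      (Fintype.card V : ZMod 2) • vecMulVec 1 1 + 1 := by
  rw [add_mul, mul_add, mul_add, vecMulVec_mul_vecMulVec, one_dotProduct_one, vecMulVec_smul,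
    mul_one, one_mul, mul_one]
  ext u v
  simp only [Matrix.add_apply, Matrix.smul_apply, Matrix.one_apply, vecMulVec_apply, smul_eq_mul]
  ring_nf
  reduce_mod_char

theorem card_le_rank_allOnes_add_one :
    Fintype.card V ≤ (vecMulVec 1 1 + 1 : Matrix V V (ZMod 2)).rank + 1 := by
  set J : Matrix V V (ZMod 2) := vecMulVec 1 1 with hJ
  have hsum : (J + 1) + J = 1 := by
    ext u v
    simp only [hJ, Matrix.add_apply, Matrix.one_apply, vecMulVec_apply]
    ring_nf
    reduce_mod_char
  calc Fintype.card V = ((J + 1) + J).rank := by rw [hsum, rank_one]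
    _ ≤ (J + 1).rank + J.rank := rank_add_le _ _
    _ ≤ (J + 1).rank + 1 := Nat.add_le_add_left (rank_vecMulVec_le _ _) _

theorem IsOddCoverFamily.card_top_le
    (hC : IsOddCoverFamily (⊤ : SimpleGraph V) C) (hV : 2 ≤ Fintype.card V) :
    (Fintype.card V + 1) / 2 ≤ Fintype.card ι := by
  have hr2 : r2 (⊤ : SimpleGraph V) = (vecMulVec 1 1 + 1 : Matrix V V (ZMod 2)).rank := by
    rw [r2_eq_rank, hC.2, hC.oddCoverMatrix_eq_allOnes_add_one]
  have hle := hC.r2_le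
  have hcard := card_le_rank_allOnes_add_one (V := V)
  rcases Nat.even_or_odd (Fintype.card V) with heven | hodd
  · have hinv : (vecMulVec 1 1 + 1 : Matrix V V (ZMod 2)) * (vecMulVec 1 1 + 1) = 1 := by
      rw [allOnes_add_one_mul_self, heven.natCast_zmod_two, zero_smul, zero_add]
    have := (rank_mul_le_left _ _).trans_eq' (by rw [hinv, rank_one])
    omega
  · have : Nonempty ι := Fintype.card_pos_iff.mp (by omega)
    have hlt := hC.r2_lt (by
      rw [hC.2, hC.oddCoverMatrix_eq_allOnes_add_one, IsIdempotentElem,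
        allOnes_add_one_mul_self, hodd.natCast_zmod_two, one_smul])
    obtain ⟨l, hl⟩ := hodd
    omega

theorem b2_top_eq_of_isOddCoverFamily
    (hC : IsOddCoverFamily (⊤ : SimpleGraph V) C) {n : ℕ} (hn : 2 ≤ n)
    (hnV : n ≤ Fintype.card V) (hι : 2 * Fintype.card ι ≤ n + 1) :
    b2 (⊤ : SimpleGraph (Fin n)) = Fintype.card ι := by
  obtain ⟨f⟩ := Function.Embedding.nonempty_of_card_le (α := Fin n) (β := V) (by simpa using hnV)
  have hD := SimpleGraph.comap_top f.injective ▸ hC.comap f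
  refine le_antisymm (b2_le_card hD) (le_b2 hD fun k B hB => ?_)
  have := hB.card_top_le (by simpa using hn)
  simp only [Fintype.card_fin] at this
  omega

def coneFamily (C : ι → Finset V × Finset V) : Option ι → Finset (Option V) × Finset (Option V)
  | none => ({none}, univ.map .some)
  | some i => ((C i).1.map .some, (C i).2.map .some)

theorem IsOddCoverFamily.cone (hC : IsOddCoverFamily (⊤ : SimpleGraph V) C) :
    IsOddCoverFamily (⊤ : SimpleGraph (Option V)) (coneFamily C) := by
  rw [isOddCoverFamily_top_iff] at hC ⊢
  refine ⟨?_, ?_⟩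
  · rintro (_ | i)
    · simp [coneFamily]
    · simpa [coneFamily] using hC.1 i
  · rintro (_ | a) (_ | b) hab
    · exact absurd rfl hab
    · simp [oddCoverMatrix_apply, Fintype.sum_option, coneFamily, charVec]
    · simp [oddCoverMatrix_apply, Fintype.sum_option, coneFamily, charVec]
    · simpa [oddCoverMatrix_apply, Fintype.sum_option, coneFamily, charVec] using
        hC.2 a b (by simpa using hab)

end OddCoverFamily

section Blocks

variable {T V J : Type*} [LinearOrder T] [Fintype T] [Fintype V] [DecidableEq V]

def blockFamily (D : J → Finset V × Finset V) (P : Finset V) (p : T × J) :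
    Finset (T × V) × Finset (T × V) :=
  (univ.filter fun v => v.2 ∈ if v.1 = p.1 then (D p.2).1 else if p.1 < v.1 then Pᶜ else P,
   univ.filter fun v => v.2 ∈ if v.1 = p.1 then (D p.2).2 else if p.1 < v.1 then P else Pᶜ)

variable {D : J → Finset V × Finset V} {P : Finset V}

theorem charVec_blockFamily_fst (t s : T) (j : J) (a : V) :
    charVec (blockFamily D P (t, j)).1 (s, a) =
      if s = t then charVec (D j).1 a else if t < s then charVec Pᶜ a else charVec P a := by
  simp only [blockFamily, charVec, Finset.mem_filter, Finset.mem_univ, true_and]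
  split_ifs <;> rfl

theorem charVec_blockFamily_snd (t s : T) (j : J) (a : V) :
    charVec (blockFamily D P (t, j)).2 (s, a) =
      if s = t then charVec (D j).2 a else if t < s then charVec P a else charVec Pᶜ a := by
  simp only [blockFamily, charVec, Finset.mem_filter, Finset.mem_univ, true_and]
  split_ifs <;> rfl

theorem sum_charVec_blockFamily_eq_zero [Fintype J] (hJ : Even (Fintype.card J)) {t s s' : T}
    (hs : t ≠ s) (hs' : t ≠ s') (a b : V) :
    ∑ j, (charVec (blockFamily D P (t, j)).1 (s, a) * charVec (blockFamily D P (t, j)).2 (s', b) +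
      charVec (blockFamily D P (t, j)).2 (s, a) * charVec (blockFamily D P (t, j)).1 (s', b)) =
      0 := by
  simp only [charVec_blockFamily_fst, charVec_blockFamily_snd, if_neg hs.symm, if_neg hs'.symm,
    Finset.sum_const, Finset.card_univ, nsmul_eq_mul, hJ.natCast_zmod_two, zero_mul]

theorem IsOddCoverFamily.blocks [Fintype J] (hD : IsOddCoverFamily (⊤ : SimpleGraph V) D)
    (hJ : Even (Fintype.card J)) (hP : ∀ a, charVec P a = ∑ j, charVec (D j).1 a)
    (hPc : ∀ a, charVec Pᶜ a = ∑ j, charVec (D j).2 a) :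
    IsOddCoverFamily (⊤ : SimpleGraph (T × V)) (blockFamily D P) := by
  rw [isOddCoverFamily_top_iff] at hD ⊢
  refine ⟨fun ⟨t, j⟩ => Finset.disjoint_filter.mpr fun v _ h₁ h₂ => ?_, ?_⟩
  · split_ifs at h₁ h₂
    · exact Finset.disjoint_left.mp (hD.1 j) h₁ h₂
    · exact Finset.mem_compl.mp h₁ h₂
    · exact Finset.mem_compl.mp h₂ h₁
  rintro ⟨s, a⟩ ⟨s', b⟩ hne
  wlog hle : s ≤ s' generalizing s a s' b
  · rw [oddCoverMatrix_comm]
    exact this s' b s a hne.symm (le_of_not_ge hle)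
  rw [oddCoverMatrix_apply, Fintype.sum_prod_type]
  rcases hle.eq_or_lt with rfl | hlt
  · rw [Fintype.sum_eq_single s fun t ht => sum_charVec_blockFamily_eq_zero hJ ht ht a b]
    simpa [charVec_blockFamily_fst, charVec_blockFamily_snd, oddCoverMatrix_apply] using
      hD.2 a b (by simpa using hne)
  · rw [Fintype.sum_eq_add s s' hlt.ne fun t ht => sum_charVec_blockFamily_eq_zero hJ ht.1 ht.2 a b]
    simp only [charVec_blockFamily_fst, charVec_blockFamily_snd, if_true, if_neg hlt.ne,
      if_neg hlt.ne', hlt, if_neg hlt.not_gt, Finset.sum_add_distrib, ← Finset.sum_mul,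
      ← Finset.mul_sum, ← hP, ← hPc]
    -- with `p, q` the characteristic vectors of `P, Pᶜ`, the blocks of `s` and `s'` contribute
    -- `p a * p b + q a * q b` and `p a * q b + q a * p b`, and `p + q = 1`
    linear_combination (charVec P b + charVec Pᶜ b) * charVec_add_charVec_compl P a +
      charVec_add_charVec_compl P b

end Blocks

def gadget : Fin 4 → Finset (Fin 8) × Finset (Fin 8) :=
  ![({0, 1, 2}, {3, 4, 5}), ({0, 3, 6}, {1, 4, 7}), ({0, 5, 7}, {2, 4, 6}), ({1, 5, 6}, {2, 3, 7})]

def gadgetParity : Finset (Fin 8) := {0, 2, 3, 7}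

theorem isOddCoverFamily_gadget : IsOddCoverFamily (⊤ : SimpleGraph (Fin 8)) gadget :=
  isOddCoverFamily_top_iff.mpr ⟨by decide, by simp only [oddCoverMatrix_apply]; decide⟩

theorem charVec_gadgetParity (a : Fin 8) :
    charVec gadgetParity a = ∑ j, charVec (gadget j).1 a := by
  revert a; decide

theorem charVec_gadgetParity_compl (a : Fin 8) :
    charVec gadgetParityᶜ a = ∑ j, charVec (gadget j).2 a := by
  revert a; decide

theorem stmt19 (k : ℕ) (hk : 1 ≤ k) :
    b2 (⊤ : SimpleGraph (Fin (8 * k - 1))) = 4 * k ∧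
    b2 (⊤ : SimpleGraph (Fin (8 * k))) = 4 * k ∧
    b2 (⊤ : SimpleGraph (Fin (8 * k + 1))) = 4 * k + 1 := by
  have hC := isOddCoverFamily_gadget.blocks (T := Fin k) (by decide) charVec_gadgetParity
    charVec_gadgetParity_compl
  have hcard : Fintype.card (Fin k × Fin 4) = 4 * k := by simp [mul_comm]
  refine ⟨?_, ?_, ?_⟩
  · rw [← hcard]
    exact b2_top_eq_of_isOddCoverFamily hC (by omega) (by simp; omega) (by omega)
  · rw [← hcard]
    exact b2_top_eq_of_isOddCoverFamily hC (by omega) (by simp; omega) (by omega)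
  · have := b2_top_eq_of_isOddCoverFamily hC.cone (n := 8 * k + 1) (by omega) (by simp; omega)
      (by simp; omega)
    simpa [hcard] using this
end
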